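/- arXiv:1009.1031 — 2 statements merged into one kernel-verified Lean document; each statement's English description precedes it below -/
import Mathlib

section
/- Adding two citizens decreases the mafia winning-chance: for all n, m with n - m ≥ m ≥ 1, w(n+2,m) < w(n,m). -/
/-- Double factorial: 0!! = 1, 1!! = 1, n!! = n·(n-2)!!. -/
def dfact : ℕ → ℕ
  | 0 => 1
  | 1 => 1
  | n + 2 => (n + 2) * dfact n

/-- Mafia winning-chance: w(n,0)=0, w(n,m)=1 if 2m>n, else
    w(n,m) = ((n-m)/n)·w(n-2,m) + (m/n)·w(n-2,m-1). -/
def w : ℕ → ℕ → ℚ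
  | _, 0 => 0
  | n, m + 1 =>
    if h : 2 * (m + 1) > n then 1
    else ((n : ℚ) - (m + 1)) / n * w (n - 2) (m + 1)
      + ((m : ℚ) + 1) / n * w (n - 2) m
  termination_by n _ => n
  decreasing_by all_goals omega

lemma w_eq (n m : ℕ) : w n (m+1) = if 2 * (m + 1) > n then 1
    else ((n : ℚ) - (m + 1)) / n * w (n - 2) (m + 1)
      + ((m : ℚ) + 1) / n * w (n - 2) m := by
  rw [w]; split <;> simp_all

lemma w_zero (n : ℕ) : w n 0 = 0 := by rw [w]

lemma w_nonneg : ∀ n m, 0 ≤ w n m := by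
  intro n
  induction n using Nat.strong_induction_on with
  | _ n ih =>
    intro m
    match m with
    | 0 => simp [w_zero]
    | m + 1 =>
      rw [w_eq]
      split
      · norm_num
      · rename_i h
        push_neg at h
        have hn : (2:ℚ) * (m+1) ≤ n := by exact_mod_cast h
        have h2 : (2:ℕ) ≤ n := by omega
        have := ih (n-2) (by omega)
        have h1 : (0:ℚ) ≤ ((n : ℚ) - (m + 1)) / n := by
          apply div_nonneg <;> [linarith; positivity]
        have h3 : (0:ℚ) ≤ ((m : ℚ) + 1) / n := by positivity
        nlinarith [this (m+1), this m]

lemma w_le_one : ∀ n m, w n m ≤ 1 := by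
  intro n
  induction n using Nat.strong_induction_on with
  | _ n ih =>
    intro m
    match m with
    | 0 => simp [w]
    | m + 1 =>
      rw [w_eq]
      split
      · norm_num
      · rename_i h
        push_neg at h
        have hn : (2:ℚ) * (m+1) ≤ n := by exact_mod_cast h
        have hnpos : (0:ℚ) < n := by linarith
        have hw1 := ih (n-2) (by omega) (m+1)
        have hw2 := ih (n-2) (by omega) m
        have h1 : (0:ℚ) ≤ (n : ℚ) - (m + 1) := by linarith
        have h3 : (0:ℚ) < (m : ℚ) + 1 := by positivity
        have hc1 : (0:ℚ) ≤ ((n : ℚ) - (m + 1)) / n := by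
          apply div_nonneg <;> linarith
        have hc2 : (0:ℚ) ≤ ((m : ℚ) + 1) / n := by positivity
        have key : ((n : ℚ) - (m + 1)) / n * w (n - 2) (m + 1)
            + ((m : ℚ) + 1) / n * w (n - 2) m
            ≤ ((n : ℚ) - (m + 1)) / n + ((m : ℚ) + 1) / n :=
          add_le_add (mul_le_of_le_one_right hc1 hw1) (mul_le_of_le_one_right hc2 hw2)
        have : ((n : ℚ) - (m + 1)) / n + ((m : ℚ) + 1) / n = 1 := by
          field_simp
          ring
        linarith

lemma w_pos : ∀ n m, 1 ≤ m → 0 < w n m := by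
  intro n
  induction n using Nat.strong_induction_on with
  | _ n ih =>
    intro m hm
    match m, hm with
    | m + 1, _ =>
      rw [w_eq]
      split
      · norm_num
      · rename_i h
        push_neg at h
        have hn : (2:ℚ) * (m+1) ≤ n := by exact_mod_cast h
        have hnpos : (0:ℚ) < n := by linarith
        have h1 : (0:ℚ) < ((n : ℚ) - (m + 1)) / n := by
          apply div_pos <;> linarith
        have hw1 := ih (n-2) (by omega) (m+1) (by omega)
        have hw2 := w_nonneg (n-2) m
        have h3 : (0:ℚ) ≤ ((m : ℚ) + 1) / n := by positivity
        nlinarith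

lemma w_mono : ∀ n m, 1 ≤ m → 2 * m ≤ n → w n (m - 1) < w n m := by
  intro n
  induction n using Nat.strong_induction_on with
  | _ n ih =>
    intro m hm h2m
    match m, hm with
    | 1, _ =>
      show w n 0 < w n 1
      rw [w_zero]
      exact w_pos n 1 le_rfl
    | j + 2, _ =>
      show w n (j+1) < w n (j+2)
      rw [w_eq n (j+1), w_eq n j]
      rw [if_neg (by omega), if_neg (by omega)]
      have hn : (2:ℚ) * (j+2) ≤ n := by exact_mod_cast h2m
      have hnpos : (0:ℚ) < n := by linarith
      -- second term strict from IH
      have hA := ih (n-2) (by omega) (j+1) (by omega) (by omega)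
      simp only [Nat.add_sub_cancel] at hA
      -- first term weak
      have hB : w (n-2) (j+1) ≤ w (n-2) (j+2) := by
        by_cases hc : 2 * (j+2) ≤ n - 2
        · exact le_of_lt (by simpa using ih (n-2) (by omega) (j+2) (by omega) hc)
        · have : w (n-2) (j+2) = 1 := by rw [w_eq]; rw [if_pos (by omega)]
          rw [this]; exact w_le_one _ _
      have c1 : (0:ℚ) ≤ ((n : ℚ) - (j+1+1)) / n := by
        apply div_nonneg <;> linarith
      have c2 : (0:ℚ) < ((j:ℚ) + 1) / n := by positivity
      have c3 : (0:ℚ) ≤ ((j:ℚ) + 1 + 1) / n := by positivity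
      push_cast
      rw [div_mul_eq_mul_div, div_mul_eq_mul_div, div_mul_eq_mul_div,
        div_mul_eq_mul_div, ← add_div, ← add_div,
        div_lt_div_iff₀ hnpos hnpos]
      have e : w (n - 2) (j + 1 + 1) = w (n - 2) (j + 2) := rfl
      rw [e]
      have d1 : (0:ℚ) ≤ (n:ℚ) - ((j:ℚ) + 2) := by linarith
      nlinarith [mul_pos hnpos (mul_pos (show (0:ℚ) < (j:ℚ)+1 by positivity) (sub_pos.2 hA)),
        mul_nonneg (mul_nonneg hnpos.le d1) (sub_nonneg.2 hB)]

theorem stmt_9 : ∀ n m : ℕ, 1 ≤ m → m ≤ n - m → w (n + 2) m < w n m := by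
  intro n m hm hmn
  have h2m : 2 * m ≤ n := by omega
  match m, hm with
  | k + 1, _ =>
    rw [w_eq (n+2) k, if_neg (by omega)]
    have hn : (2:ℚ) * (k+1) ≤ n := by exact_mod_cast h2m
    have hnpos : (0:ℚ) < (n:ℚ) + 2 := by linarith
    simp only [Nat.add_sub_cancel]
    have hmono := w_mono n (k+1) (by omega) h2m
    simp only [Nat.add_sub_cancel] at hmono
    have c2 : (0:ℚ) < ((k:ℚ) + 1) / ((n:ℚ)+2) := by positivity
    have hsum : ((n:ℚ) + 2 - (k + 1)) / ((n:ℚ)+2) + ((k:ℚ) + 1) / ((n:ℚ)+2) = 1 := by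
      field_simp
      ring
    push_cast
    nlinarith [w_nonneg n (k+1)]
end

section
/- The mafia winning-chance admits the closed form w(n,m) = 1 - Σ_{i=0}^{m} C(m,i)·(-1)^i·(n-i)!!/(n!!·((n mod 2) - i)!!) for all n, m with 1 ≤ m ≤ n - m, where (k)!! for negative odd k is interpreted via the convention making ((n mod 2) - i)!! the appropriate terminal double factorial; equivalently, w(n,m) = 1 - Σ_{i=0}^{m} C(m,i)·(-1)^i·((n-i)!!/n!!)·(r!!/(r-i)!!) where r = n mod 2 (with the convention (-1)!! = 1). -/
/-- Double factorial extended to negative integers (as a rational):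
    for k ≥ 0 it is k!!, and for negative odd k = -(2j+1) it is
    (-1)^j / (2j-1)!! (so that (-1)!! = 1, (-3)!! = -1, (-5)!! = 1/3, ...);
    negative even double factorials are set to 0 (their reciprocal vanishes). -/
def dfactZ : ℤ → ℚ
  | (n : ℕ) => (dfact n : ℚ)
  | .negSucc k => if k % 2 = 0 then ((-1 : ℚ)) ^ (k / 2) / (dfact (k - 1) : ℚ) else 0

lemma dfact_pos (n : ℕ) : 0 < dfact n := by
  induction n using dfact.induct <;> simp [dfact] <;> omega

lemma dfact_ne (n : ℕ) : (dfact n : ℚ) ≠ 0 := by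
  have := dfact_pos n
  exact_mod_cast Nat.pos_iff_ne_zero.mp this
  
lemma dfact_eq_mul (k : ℕ) (hk : 1 ≤ k) : dfact k = k * dfact (k - 2) := by
  match k, hk with
  | 1, _ => simp [dfact]
  | (n+2), _ => rfl

lemma dfactZ_ofNat (k : ℕ) : dfactZ (k : ℤ) = (dfact k : ℚ) := rfl

lemma dfactZ_negSucc (k : ℕ) :
    dfactZ (Int.negSucc k) = if k % 2 = 0 then ((-1 : ℚ)) ^ (k / 2) / (dfact (k - 1) : ℚ) else 0 := rfl

lemma negSucc_eq (j : ℕ) : (-1 - (j:ℤ)) = Int.negSucc j := by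
  rw [Int.negSucc_eq]; push_cast; ring

lemma negSucc_eq2 (j : ℕ) (hj : 2 ≤ j) : (1 - (j:ℤ)) = Int.negSucc (j - 2) := by
  rw [Int.negSucc_eq]; push_cast [hj]; ring

lemma dfactZ_zero : dfactZ 0 = 1 := by
  have : (0:ℤ) = ((0:ℕ):ℤ) := by norm_num
  rw [this, dfactZ_ofNat]; norm_num [dfact]

lemma dfactZ_one : dfactZ 1 = 1 := by
  have : (1:ℤ) = ((1:ℕ):ℤ) := by norm_num
  rw [this, dfactZ_ofNat]; norm_num [dfact]

lemma DZ (j : ℕ) : (dfactZ (-1 - (j:ℤ)))⁻¹ = ((1:ℚ) - j) * (dfactZ (1 - (j:ℤ)))⁻¹ := by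
  rw [negSucc_eq, dfactZ_negSucc]
  match j with
  | 0 => norm_num [dfactZ_one, dfact]
  | 1 => norm_num [dfactZ_zero, dfact]
  | (j+2) =>
    rw [negSucc_eq2 (j+2) (by omega)]
    simp only [Nat.add_sub_cancel, dfactZ_negSucc]
    rcases Nat.mod_two_eq_zero_or_one j with h | h
    · have h2 : (j+2) % 2 = 0 := by omega
      rw [if_pos h2, if_pos h]
      have hd : (j+2)/2 = j/2 + 1 := by omega
      have hd2 : dfact (j+2-1) = (j+1) * dfact (j-1) := by
        have := dfact_eq_mul (j+1) (by omega)
        simpa using this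
      rw [hd, hd2, inv_div, inv_div]
      push_cast
      rw [pow_succ]
      rw [div_eq_mul_inv, div_eq_mul_inv]
      have : ((-1:ℚ)^(j/2))⁻¹ = (-1)^(j/2) := by
        rw [← inv_pow]; norm_num
      rw [mul_inv, this]
      ring
    · have h2 : (j+2) % 2 = 1 := by omega
      rw [if_neg (by omega), if_neg (by omega)]
      norm_num

lemma helper (X a c D1 D2 t : ℚ) (ha : a ≠ 0) (h : D1⁻¹ = t * D2⁻¹) :
    X / (c * D1) = t * (a / c) * (X / (a * D2)) := by
  rw [div_eq_mul_inv, div_eq_mul_inv, div_eq_mul_inv, mul_inv, mul_inv, h]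
  have h2 : a * a⁻¹ = 1 := mul_inv_cancel₀ ha
  linear_combination (-(X * c⁻¹ * t * D2⁻¹)) * h2

/-- single term (without binomial/sign) -/
def b (n i : ℕ) : ℚ :=
  (dfact (n - i) : ℚ) / ((dfact n : ℚ) * dfactZ ((n % 2 : ℕ) - (i : ℤ)))

def T (n m : ℕ) : ℚ :=
  ∑ i ∈ Finset.range (m + 1), (m.choose i : ℚ) * (-1 : ℚ) ^ i * b n i

lemma b_zero (n : ℕ) : b n 0 = 1 := by
  rw [b]
  simp only [Nat.sub_zero, Nat.cast_zero, sub_zero]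
  rcases Nat.mod_two_eq_zero_or_one n with h | h <;>
    rw [h] <;> push_cast <;>
    simp [dfactZ_zero, dfactZ_one, dfact_ne n, div_self, mul_one]

lemma T_zero (n : ℕ) : T n 0 = 1 := by
  simp [T, b_zero]

lemma SH_odd (n j : ℕ) (h : n % 2 = 1) :
    b n (j+1) = ((dfact (n-1) : ℚ) / (dfact n : ℚ)) * b (n-1) j := by
  rw [b, b]
  have h1 : (n - 1) % 2 = 0 := by omega
  have h2 : n - (j+1) = (n-1) - j := by omega
  rw [h, h1, h2]
  have h3 : ((1:ℕ):ℤ) - ((j:ℕ)+1 : ℤ) = ((0:ℕ):ℤ) - (j:ℤ) := by push_cast; ring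
  push_cast only [Nat.cast_one, Nat.cast_zero] at h3
  rw [show ((j:ℕ)+1 : ℕ) = (j+1 : ℕ) from rfl]
  push_cast
  rw [h3]
  have := helper (dfact (n-1-j) : ℚ) (dfact (n-1) : ℚ) (dfact n : ℚ)
      (dfactZ ((0:ℤ) - j)) (dfactZ ((0:ℤ) - j)) 1 (dfact_ne _) (by rw [one_mul])
  rw [one_mul] at this
  convert this using 3 <;> push_cast <;> ring

lemma SH_even (n j : ℕ) (h : n % 2 = 0) (hn : 2 ≤ n) :
    b n (j+1) = (((1:ℚ) - j) * ((dfact (n-1) : ℚ) / (dfact n : ℚ))) * b (n-1) j := by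
  rw [b, b]
  have h1 : (n - 1) % 2 = 1 := by omega
  have h2 : n - (j+1) = (n-1) - j := by omega
  rw [h, h1, h2]
  have h3 : ((0:ℕ):ℤ) - ((j+1 : ℕ) : ℤ) = -1 - (j:ℤ) := by push_cast; ring
  rw [h3]
  have := helper (dfact (n-1-j) : ℚ) (dfact (n-1) : ℚ) (dfact n : ℚ)
      (dfactZ (-1 - (j:ℤ))) (dfactZ (1 - (j:ℤ))) ((1:ℚ) - j) (dfact_ne _) (DZ j)
  convert this using 3 <;> push_cast <;> ring

lemma dfactZ_neg_even (a : ℕ) (h : a % 2 = 1) : dfactZ (Int.negSucc a) = 0 := by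
  rw [dfactZ_negSucc, if_neg (by omega)]

lemma choose_key (m i : ℕ) (hm : 1 ≤ m) (hi : i ≤ m) :
    (m : ℚ) * ((m-1).choose i : ℚ) = ((m : ℚ) - i) * (m.choose i : ℚ) := by
  rcases Nat.lt_or_ge i m with hlt | hge
  · have hm1 : m - 1 + 1 = m := by omega
    have h1 : m * ((m-1).choose i) = (m.choose (i+1)) * (i+1) := by
      have := Nat.add_one_mul_choose_eq (m-1) i
      try simp only [Nat.succ_eq_add_one] at this
      rw [hm1] at this
      exact this
    have h2 : (m.choose (i+1)) * (i+1) = (m.choose i) * (m - i) := Nat.choose_succ_right_eq m i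
    have h3 : m * ((m-1).choose i) = (m.choose i) * (m - i) := by rw [h1, h2]
    have h4 : ((m * ((m-1).choose i) : ℕ) : ℚ) = (((m.choose i) * (m - i) : ℕ) : ℚ) := by
      rw [h3]
    push_cast [Nat.cast_sub (le_of_lt hlt)] at h4
    linarith [h4]
  · have hieq : i = m := le_antisymm hi hge
    rw [hieq, Nat.choose_eq_zero_of_lt (show m - 1 < m by omega)]
    push_cast
    ring

lemma TI (n m i : ℕ) (hn : 2 ≤ n) (hm : 1 ≤ m) (him : i ≤ m) (hmn : m ≤ n) :
    (n:ℚ) * ((m.choose i : ℚ) * (-1:ℚ)^i * b n i)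
    = ((n:ℚ) - (m:ℚ)) * ((m.choose i : ℚ) * (-1:ℚ)^i * b (n-2) i)
      + (m:ℚ) * (((m-1).choose i : ℚ) * (-1:ℚ)^i * b (n-2) i) := by
  have hmod : (n-2) % 2 = n % 2 := by omega
  by_cases hD : dfactZ (((n % 2 : ℕ) : ℤ) - (i : ℤ)) = 0
  · rw [b, b, hmod, hD]
    simp
  · have hi : i < n := by
      rcases Nat.lt_or_ge i n with h | h
      · exact h
      · exfalso
        have hieq : i = n := by omega
        apply hD
        have hns : ((n % 2 : ℕ) : ℤ) - (i : ℤ) = Int.negSucc (n - n % 2 - 1) := by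
          rw [Int.negSucc_eq]
          push_cast [show n % 2 ≤ n by omega]
          omega
        rw [hns]
        exact dfactZ_neg_even _ (by omega)
    rw [b, b, hmod]
    have e1 : (dfact n : ℚ) = (n : ℚ) * (dfact (n-2) : ℚ) := by
      exact_mod_cast dfact_eq_mul n (by omega)
    have e2 : (dfact (n - i) : ℚ) = ((n : ℚ) - (i:ℚ)) * (dfact (n-2-i) : ℚ) := by
      have h0 := dfact_eq_mul (n - i) (by omega)
      have h22 : n - i - 2 = n - 2 - i := by omega
      rw [h22] at h0
      have e2' : (dfact (n-i) : ℚ) = ((n - i : ℕ) : ℚ) * (dfact (n-2-i) : ℚ) := by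
        exact_mod_cast h0
      rw [Nat.cast_sub hi.le] at e2'
      exact e2'
    have hkey := choose_key m i hm him
    rw [e1, e2]
    set D := dfactZ (((n % 2 : ℕ) : ℤ) - (i : ℤ)) with hDdef
    have hd2 : (dfact (n-2) : ℚ) ≠ 0 := dfact_ne _
    have hn0 : (n : ℚ) ≠ 0 := by
      exact_mod_cast Nat.pos_iff_ne_zero.mp (by omega)
    field_simp
    linear_combination (-(dfact (n-2-i) : ℚ)) * hkey

lemma SUM (n m : ℕ) (hn : 2 ≤ n) (hm : 1 ≤ m) (hmn : m ≤ n) :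
    (n:ℚ) * T n m = ((n:ℚ) - (m:ℚ)) * T (n-2) m + (m:ℚ) * T (n-2) (m-1) := by
  rw [T, T, T, Finset.mul_sum, Finset.mul_sum, Finset.mul_sum]
  have hrange : m - 1 + 1 = m := by omega
  rw [hrange]
  have hstep : ∀ x ∈ Finset.range (m+1),
      (n:ℚ) * ((m.choose x : ℚ) * (-1:ℚ)^x * b n x)
      = ((n:ℚ) - (m:ℚ)) * ((m.choose x : ℚ) * (-1:ℚ)^x * b (n-2) x)
        + (m:ℚ) * (((m-1).choose x : ℚ) * (-1:ℚ)^x * b (n-2) x) := by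
    intro x hx
    exact TI n m x hn hm (by simp at hx; omega) hmn
  rw [Finset.sum_congr rfl hstep, Finset.sum_add_distrib]
  congr 1
  rw [Finset.sum_range_succ, Nat.choose_eq_zero_of_lt (show m - 1 < m by omega)]
  simp

lemma OP (n m : ℕ) (hodd : n % 2 = 1) (hm : 1 ≤ m) :
    T n m = T n (m-1) - ((dfact (n-1) : ℚ)/(dfact n : ℚ)) * T (n-1) (m-1) := by
  obtain ⟨k, rfl⟩ : ∃ k, m = k + 1 := ⟨m-1, by omega⟩
  simp only [Nat.add_sub_cancel]
  set c : ℚ := (dfact (n-1) : ℚ)/(dfact n : ℚ) with hc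
  rw [T, Finset.sum_range_succ']
  have hsplit : ∀ j ∈ Finset.range (k+1),
      ((k+1).choose (j+1) : ℚ) * (-1:ℚ)^(j+1) * b n (j+1)
      = (k.choose (j+1) : ℚ) * (-1:ℚ)^(j+1) * b n (j+1)
        + (-(1:ℚ)) * ((k.choose j : ℚ) * (-1:ℚ)^j * (c * b (n-1) j)) := by
    intro j hj
    rw [Nat.choose_succ_succ, SH_odd n j hodd]
    push_cast
    ring
  rw [Finset.sum_congr rfl hsplit, Finset.sum_add_distrib]
  have hA : (∑ j ∈ Finset.range (k+1), (k.choose (j+1) : ℚ) * (-1:ℚ)^(j+1) * b n (j+1))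
      = T n k - (k.choose 0 : ℚ) * (-1:ℚ)^0 * b n 0 := by
    have h1 : (∑ i ∈ Finset.range (k+2), (k.choose i : ℚ) * (-1:ℚ)^i * b n i) = T n k := by
      rw [Finset.sum_range_succ, Nat.choose_eq_zero_of_lt (show k < k + 1 by omega)]
      simp [T]
    rw [Finset.sum_range_succ'] at h1
    linarith [h1]
  have hB : (∑ j ∈ Finset.range (k+1), (-(1:ℚ)) * ((k.choose j : ℚ) * (-1:ℚ)^j * (c * b (n-1) j)))
      = -(c * T (n-1) k) := by
    rw [T, Finset.mul_sum, ← Finset.sum_neg_distrib]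
    apply Finset.sum_congr rfl
    intro j hj
    ring
  rw [hA, hB]
  simp
  ring

lemma EP (n m : ℕ) (heven : n % 2 = 0) (hn : 2 ≤ n) (hm : 2 ≤ m) :
    T n m = T n (m-1) - ((dfact (n-1) : ℚ)/(dfact n : ℚ)) * T (n-1) (m-1)
      - ((m:ℚ) - 1) * ((dfact (n-2) : ℚ)/(dfact n : ℚ)) * T (n-2) (m-2) := by
  obtain ⟨k, rfl⟩ : ∃ k, m = k + 1 := ⟨m-1, by omega⟩
  simp only [Nat.add_sub_cancel]
  have hk : 1 ≤ k := by omega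
  set c : ℚ := (dfact (n-1) : ℚ)/(dfact n : ℚ) with hc
  set c2 : ℚ := (dfact (n-2) : ℚ)/(dfact (n-1) : ℚ) with hc2
  have hodd1 : (n-1) % 2 = 1 := by omega
  rw [T, Finset.sum_range_succ']
  have hsplit : ∀ j ∈ Finset.range (k+1),
      ((k+1).choose (j+1) : ℚ) * (-1:ℚ)^(j+1) * b n (j+1)
      = (k.choose (j+1) : ℚ) * (-1:ℚ)^(j+1) * b n (j+1)
        + ((-(1:ℚ)) * ((k.choose j : ℚ) * (-1:ℚ)^j * (c * b (n-1) j))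
            + ((j:ℚ) * (k.choose j : ℚ)) * ((-1:ℚ)^j * (c * b (n-1) j))) := by
    intro j hj
    rw [Nat.choose_succ_succ, SH_even n j heven hn]
    push_cast
    ring
  rw [Finset.sum_congr rfl hsplit, Finset.sum_add_distrib, Finset.sum_add_distrib]
  have hA : (∑ j ∈ Finset.range (k+1), (k.choose (j+1) : ℚ) * (-1:ℚ)^(j+1) * b n (j+1))
      = T n k - (k.choose 0 : ℚ) * (-1:ℚ)^0 * b n 0 := by
    have h1 : (∑ i ∈ Finset.range (k+2), (k.choose i : ℚ) * (-1:ℚ)^i * b n i) = T n k := by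
      rw [Finset.sum_range_succ, Nat.choose_eq_zero_of_lt (show k < k + 1 by omega)]
      simp [T]
    rw [Finset.sum_range_succ'] at h1
    linarith [h1]
  have hB : (∑ j ∈ Finset.range (k+1), (-(1:ℚ)) * ((k.choose j : ℚ) * (-1:ℚ)^j * (c * b (n-1) j)))
      = -(c * T (n-1) k) := by
    rw [T, Finset.mul_sum, ← Finset.sum_neg_distrib]
    apply Finset.sum_congr rfl
    intro j hj
    ring
  have hJ : (∑ j ∈ Finset.range (k+1), ((j:ℚ) * (k.choose j : ℚ)) * ((-1:ℚ)^j * (c * b (n-1) j)))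
      = -((k:ℚ) * (c * c2 * T (n-2) (k-1))) := by
    rw [Finset.sum_range_succ']
    have hterm : ∀ t ∈ Finset.range k,
        (((t+1:ℕ):ℚ) * (k.choose (t+1) : ℚ)) * ((-1:ℚ)^(t+1) * (c * b (n-1) (t+1)))
        = (-(1:ℚ)) * ((k:ℚ) * c * c2) * (((k-1).choose t : ℚ) * (-1:ℚ)^t * b (n-2) t) := by
      intro t ht
      have hnat : k * ((k-1).choose t) = (k.choose (t+1)) * (t+1) := by
        have := Nat.add_one_mul_choose_eq (k-1) t
        try simp only [Nat.succ_eq_add_one] at this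
        rw [show k - 1 + 1 = k by omega] at this
        exact this
      have hcast : (k:ℚ) * (((k-1).choose t : ℕ) : ℚ) = ((k.choose (t+1) : ℕ) : ℚ) * ((t:ℚ)+1) := by
        exact_mod_cast hnat
      have hsh : b (n-1) (t+1) = c2 * b (n-2) t := by
        have h0 := SH_odd (n-1) t hodd1
        rw [show n - 1 - 1 = n - 2 by omega] at h0
        rw [hc2]
        exact h0
      rw [hsh]
      push_cast
      linear_combination (((-1:ℚ)^t * c * c2 * b (n-2) t)) * hcast
    rw [Finset.sum_congr rfl hterm, ← Finset.mul_sum]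
    rw [T, show k - 1 + 1 = k by omega]
    push_cast
    ring
  rw [hA, hB, hJ]
  have hcc : c * c2 = (dfact (n-2) : ℚ)/(dfact n : ℚ) := by
    rw [hc, hc2]
    rw [div_mul_div_comm]
    rw [mul_comm ((dfact n:ℚ)) ((dfact (n-1):ℚ))]
    exact mul_div_mul_left _ _ (dfact_ne (n-1))
  rw [hcc]
  simp only [Nat.choose_zero_right, pow_zero, Nat.cast_one]
  push_cast
  ring

lemma dfactZ_neg_one : dfactZ (-1) = 1 := by
  have h : (-1:ℤ) = Int.negSucc 0 := by decide
  rw [h, dfactZ_negSucc]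
  norm_num [dfact]

lemma T01 : T 0 1 = 0 := by
  rw [T, Finset.sum_range_succ, Finset.sum_range_succ, Finset.sum_range_zero, b, b]
  norm_num [dfactZ_zero, dfactZ_neg_one, dfact]

lemma T11 : T 1 1 = 0 := by
  rw [T, Finset.sum_range_succ, Finset.sum_range_succ, Finset.sum_range_zero, b, b]
  norm_num [dfactZ_zero, dfactZ_one, dfact]

lemma band : ∀ N n m : ℕ, n + m ≤ N → 1 ≤ m → m ≤ n + 1 → n < 2 * m → T n m = 0 := by
  intro N
  induction N with
  | zero => intro n m h h1 _ _; omega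
  | succ N ih =>
    intro n m hN h1 h2 h3
    have hn0 : (n:ℚ) ≠ 0 ∨ n = 0 := by
      rcases Nat.eq_zero_or_pos n with h | h
      · exact Or.inr h
      · exact Or.inl (by exact_mod_cast Nat.pos_iff_ne_zero.mp h)
    rcases Nat.mod_two_eq_zero_or_one n with hpar | hpar
    · -- n even
      rcases Nat.eq_zero_or_pos n with hz | hpos
      · -- n = 0 → m = 1
        have : m = 1 := by omega
        rw [hz, this]
        exact T01
      · have hn2 : 2 ≤ n := by omega
        by_cases hd : m ≤ n
        · -- SUM path
          have hm2 : 2 ≤ m := by omega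
          have hs := SUM n m hn2 h1 hd
          have hT2 : T (n-2) (m-1) = 0 :=
            ih (n-2) (m-1) (by omega) (by omega) (by omega) (by omega)
          rw [hT2] at hs
          by_cases hmn : m = n
          · have : ((n:ℚ) - (m:ℚ)) = 0 := by
              rw [hmn]; ring
            rw [this] at hs
            simp at hs
            rcases hs with h | h
            · exact absurd h (by exact_mod_cast Nat.pos_iff_ne_zero.mp (by omega : 0 < n))
            · exact h
          · have hT1 : T (n-2) m = 0 :=
              ih (n-2) m (by omega) h1 (by omega) (by omega)
            rw [hT1] at hs
            simp at hs
            rcases hs with h | h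
            · exact absurd h (by exact_mod_cast Nat.pos_iff_ne_zero.mp (by omega : 0 < n))
            · exact h
        · -- m = n + 1, even Pascal
          have hmn1 : m = n + 1 := by omega
          have hep := EP n m hpar hn2 (by omega)
          have e1 : T n (m-1) = 0 := ih n (m-1) (by omega) (by omega) (by omega) (by omega)
          have e2 : T (n-1) (m-1) = 0 := ih (n-1) (m-1) (by omega) (by omega) (by omega) (by omega)
          have e3 : T (n-2) (m-2) = 0 := ih (n-2) (m-2) (by omega) (by omega) (by omega) (by omega)
          rw [e1, e2, e3] at hep
          simpa using hep
    · -- n odd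
      by_cases hedge : n + 1 = 2 * m
      · rcases Nat.eq_or_lt_of_le h1 with hm1 | hm2
        · -- m = 1, n = 1
          rw [show n = 1 by omega, ← hm1]
          exact T11
        · -- m ≥ 2, SUM path
          have hn2 : 2 ≤ n := by omega
          have hs := SUM n m hn2 h1 (by omega)
          have hT1 : T (n-2) m = 0 := ih (n-2) m (by omega) h1 (by omega) (by omega)
          have hT2 : T (n-2) (m-1) = 0 := ih (n-2) (m-1) (by omega) (by omega) (by omega) (by omega)
          rw [hT1, hT2] at hs
          simp at hs
          rcases hs with h | h
          · exact absurd h (by exact_mod_cast Nat.pos_iff_ne_zero.mp (by omega : 0 < n))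
          · exact h
      · -- n ≤ 2m - 3, odd Pascal
        have hop := OP n m hpar h1
        have e1 : T n (m-1) = 0 := ih n (m-1) (by omega) (by omega) (by omega) (by omega)
        have e2 : T (n-1) (m-1) = 0 := ih (n-1) (m-1) (by omega) (by omega) (by omega) (by omega)
        rw [e1, e2] at hop
        simpa using hop

lemma main : ∀ N n m : ℕ, n ≤ N → 1 ≤ m → 2 * m ≤ n → w n m = 1 - T n m := by
  intro N
  induction N with
  | zero => intro n m h h1 h2; omega
  | succ N ih =>
    intro n m hN h1 h2
    obtain ⟨k, rfl⟩ : ∃ k, m = k + 1 := ⟨m-1, by omega⟩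
    have hn2 : 2 ≤ n := by omega
    rw [w, dif_neg (by omega : ¬ 2*(k+1) > n)]
    have e1 : w (n-2) (k+1) = 1 - T (n-2) (k+1) := by
      by_cases hc : 2*(k+1) ≤ n - 2
      · exact ih (n-2) (k+1) (by omega) (by omega) hc
      · have hw : w (n-2) (k+1) = 1 := by
          rw [w, dif_pos (by omega : 2*(k+1) > n - 2)]
        have hT : T (n-2) (k+1) = 0 :=
          band (n-2+(k+1)) (n-2) (k+1) le_rfl (by omega) (by omega) (by omega)
        rw [hw, hT]
        norm_num
    have e2 : w (n-2) k = 1 - T (n-2) k := by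
      rcases Nat.eq_zero_or_pos k with rfl | hk
      · rw [show w (n-2) 0 = 0 by rw [w], T_zero]
        norm_num
      · exact ih (n-2) k (by omega) hk (by omega)
    rw [e1, e2]
    have hs := SUM n (k+1) hn2 (by omega) (by omega)
    have hn0 : (n : ℚ) ≠ 0 := by
      exact_mod_cast Nat.pos_iff_ne_zero.mp (by omega : 0 < n)
    field_simp
    push_cast at hs ⊢
    linarith [hs]

theorem stmt_16 : ∀ n m : ℕ, 1 ≤ m → m ≤ n - m →
    w n m = 1 - ∑ i ∈ Finset.range (m + 1),
      (m.choose i : ℚ) * (-1 : ℚ) ^ i * (dfact (n - i) : ℚ) /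
        ((dfact n : ℚ) * dfactZ ((n % 2 : ℕ) - (i : ℤ))) := by
  intro n m h1 h2
  have h3 : 2 * m ≤ n := by omega
  have hmain := main n n m le_rfl h1 h3
  rw [hmain, T]
  congr 1
  apply Finset.sum_congr rfl
  intro i hi
  rw [b, mul_div_assoc]
end
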